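/- With the notation of Lemma 3.1 (colored partition counts d_k and the counts e_k of such partitions with largest part exactly k), for all u, v ∈ ℕ and k, n ≥ 1: e_{(2k+1)_{ab}}(u,v,n) = d_{(2k−1)_a}(u−1, v−1, n−2k−1), i.e., removing the largest part (2k+1)_{ab} from a colored partition with largest part exactly (2k+1)_{ab} gives a bijection onto colored partitions with largest part at most (2k−1)_a, u decreased by 1, v decreased by 1, and weight decreased by 2k+1. -/

import Mathlib

/-- The five colours a, b, ab, a², b². -/
inductive Col where
  | a | b | ab | aa | bb
deriving DecidableEq, Inhabited

open Col

/-- Position of a coloured integer in the ordering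
1_{ab} < 1_a < 1_{b²} < 1_b < 2_{ab} < 2_a < 3_{a²} < 2_b < 3_{ab} < ⋯ . -/
def colPos : ℕ × Col → ℕ
  | (k, Col.ab) => 4 * k - 4
  | (k, Col.a)  => 4 * k - 3
  | (k, Col.bb) => 4 * k - 2
  | (k, Col.b)  => 4 * k - 1
  | (k, Col.aa) => 4 * k - 6

/-- Entry of the matrix A: minimal gap below a part of size `k` and colour `x`,
above a part of colour `y`. -/
def colMinGap (k : ℕ) (x y : Col) : ℕ :=
  match x, y with
  | Col.a, y => if k % 2 = 1 then
      (match y with | Col.ab => 1 | _ => 2)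
    else
      (match y with | Col.aa => 3 | Col.bb => 3 | _ => 2)
  | Col.bb, y => (match y with | Col.b => 3 | Col.bb => 4 | _ => 2)
  | Col.b, y => if k % 2 = 1 then
      (match y with | Col.a => 1 | Col.ab => 1 | _ => 2)
    else
      (match y with | Col.a => 1 | Col.ab => 1 | Col.aa => 1 | Col.bb => 3 | _ => 2)
  | Col.ab, y => if k % 2 = 0 then
      (match y with | Col.aa => 3 | Col.bb => 3 | _ => 2)
    else
      (match y with | Col.b => 3 | Col.bb => 3 | _ => 2)
  | Col.aa, y => (match y with | Col.aa => 4 | Col.bb => 4 | _ => 3)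

/-- A coloured partition as in the non-dilated Siladić theorem: parts are coloured
positive integers, squared colours only occur on odd integers, there is no part
1_{ab} or 1_{b²}, and consecutive parts satisfy the gap conditions of matrix A. -/
def IsColPartition (l : List (ℕ × Col)) : Prop :=
  (∀ p ∈ l, 1 ≤ p.1 ∧ ((p.2 = Col.aa ∨ p.2 = Col.bb) → p.1 % 2 = 1) ∧
    p ≠ (1, Col.ab) ∧ p ≠ (1, Col.bb)) ∧
  ∀ i, i + 1 < l.length →
    l[i]!.1 ≥ l[i+1]!.1 + colMinGap l[i]!.1 l[i]!.2 l[i+1]!.2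

/-- Number of parts coloured a or ab, plus twice the number of parts coloured a². -/
def aCt (l : List (ℕ × Col)) : ℕ :=
  (l.countP fun p => p.2 == Col.a || p.2 == Col.ab) +
    2 * (l.countP fun p => p.2 == Col.aa)

/-- Number of parts coloured b or ab, plus twice the number of parts coloured b². -/
def bCt (l : List (ℕ × Col)) : ℕ :=
  (l.countP fun p => p.2 == Col.b || p.2 == Col.ab) +
    2 * (l.countP fun p => p.2 == Col.bb)

/-- D(u,v,n): coloured partitions of n with a-count u and b-count v. -/
noncomputable def Dct (u v n : ℕ) : ℕ :=
  Nat.card {l : List (ℕ × Col) // IsColPartition l ∧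
    (l.map Prod.fst).sum = n ∧ aCt l = u ∧ bCt l = v}

/-- d_K(u,v,n): as D(u,v,n) but with largest part at most K in the coloured order;
integer arguments (negative values give 0). -/
noncomputable def dct (K : ℕ × Col) (u v n : ℤ) : ℕ :=
  Nat.card {l : List (ℕ × Col) // IsColPartition l ∧
    (∀ p ∈ l, colPos p ≤ colPos K) ∧
    ((l.map Prod.fst).sum : ℤ) = n ∧ (aCt l : ℤ) = u ∧ (bCt l : ℤ) = v}

/-- e_K(u,v,n): as d_K(u,v,n) but with largest part exactly K. -/
noncomputable def ect (K : ℕ × Col) (u v n : ℤ) : ℕ :=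
  Nat.card {l : List (ℕ × Col) // IsColPartition l ∧
    (∀ p ∈ l, colPos p ≤ colPos K) ∧ l ≠ [] ∧ l.head! = K ∧
    ((l.map Prod.fst).sum : ℤ) = n ∧ (aCt l : ℤ) = u ∧ (bCt l : ℤ) = v}

/-- The generating function G_K(a,b,q) = 1 + ∑_{u,v≥0,n≥1} d_K(u,v,n) aᵘbᵛqⁿ,
as a formal power series in the variables a = X 0, b = X 1, q = X 2. -/
noncomputable def Gf (K : ℕ × Col) : MvPowerSeries (Fin 3) ℚ :=
  fun e => (dct K (e 0) (e 1) (e 2) : ℚ)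

/-!
Every part of such a partition after the largest one is strictly smaller than it, and for an odd
`j` the gap `A_{ab, y}` below `j_{ab}` is exactly what makes the next part `q_y` satisfy
`q_y ≤ (j - 2)_a` in the coloured order. Hence deleting the largest part `(2k+1)_{ab}` is a
bijection onto the partitions with largest part at most `(2k-1)_a`.
-/

def IsColPart (p : ℕ × Col) : Prop :=
  1 ≤ p.1 ∧ ((p.2 = Col.aa ∨ p.2 = Col.bb) → p.1 % 2 = 1) ∧ p ≠ (1, Col.ab) ∧ p ≠ (1, Col.bb)

lemma one_le_colMinGap (k : ℕ) (x y : Col) : 1 ≤ colMinGap k x y := by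
  rcases Nat.mod_two_eq_zero_or_one k with h | h <;>
    cases x <;> cases y <;> simp [colMinGap.eq_def, h]

lemma colPos_bounds (q : ℕ × Col) : 4 * q.1 - 6 ≤ colPos q ∧ colPos q ≤ 4 * q.1 - 1 := by
  obtain ⟨j, c⟩ := q
  cases c <;> simp only [colPos] <;> omega

lemma isColPartition_cons_iff {p : ℕ × Col} {m : List (ℕ × Col)} :
    IsColPartition (p :: m) ↔ IsColPart p ∧ IsColPartition m ∧
      ∀ q ∈ m.head?, q.1 + colMinGap p.1 p.2 q.2 ≤ p.1 := by
  unfold IsColPartition IsColPart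
  constructor
  · rintro ⟨hparts, hgaps⟩
    refine ⟨hparts p List.mem_cons_self,
      ⟨fun q hq => hparts q (List.mem_cons_of_mem p hq),
        fun i hi => by simpa using hgaps (i + 1) (by simpa using hi)⟩, ?_⟩
    cases m with
    | nil => simp
    | cons q m => simpa using hgaps 0 (by simp)
  · rintro ⟨hp, ⟨hparts, hgaps⟩, hhead⟩
    refine ⟨List.forall_mem_cons.2 ⟨hp, hparts⟩, fun i hi => ?_⟩
    cases i with
    | zero =>
      cases m with
      | nil => simp at hi
      | cons q m => simpa using hhead q rfl
    | succ i => simpa using hgaps i (by simpa using hi)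

lemma IsColPartition.lt_of_mem_tail {p : ℕ × Col} {m : List (ℕ × Col)}
    (h : IsColPartition (p :: m)) : ∀ q ∈ m, q.1 < p.1 := by
  induction m generalizing p with
  | nil => simp
  | cons q m ih =>
    obtain ⟨-, hqm, hgap⟩ := isColPartition_cons_iff.1 h
    have hqp : q.1 < p.1 := by
      have := one_le_colMinGap p.1 p.2 q.2
      have := hgap q rfl
      omega
    intro r hr
    rcases List.mem_cons.1 hr with rfl | hr
    · exact hqp
    · exact (ih hqm r hr).trans hqp

lemma gap_ab_odd_le_iff {k : ℕ} (hk : 1 ≤ k) (q : ℕ × Col) :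
    q.1 + colMinGap (2 * k + 1) Col.ab q.2 ≤ 2 * k + 1 ↔ colPos q ≤ colPos (2 * k - 1, Col.a) := by
  have hodd : (2 * k + 1) % 2 = 1 := by omega
  obtain ⟨j, c⟩ := q
  cases c <;> simp only [colMinGap.eq_def, colPos, hodd, one_ne_zero, ↓reduceIte] <;> omega

lemma isColPartition_cons_ab_odd_iff {k : ℕ} (hk : 1 ≤ k) {m : List (ℕ × Col)} :
    IsColPartition ((2 * k + 1, Col.ab) :: m) ↔
      IsColPartition m ∧ ∀ q ∈ m, colPos q ≤ colPos (2 * k - 1, Col.a) := by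
  have hpart : IsColPart (2 * k + 1, Col.ab) :=
    ⟨by omega, by simp, by simp only [ne_eq, Prod.mk.injEq]; omega, by simp⟩
  rw [isColPartition_cons_iff]
  refine ⟨fun ⟨_, hm, hgap⟩ => ⟨hm, ?_⟩, fun ⟨hm, hbound⟩ => ⟨hpart, hm, ?_⟩⟩
  · cases m with
    | nil => simp
    | cons p m =>
      have hp := (gap_ab_odd_le_iff hk p).1 (hgap p rfl)
      refine List.forall_mem_cons.2 ⟨hp, fun q hq => ?_⟩
      -- `p.1 ≤ 2k - 1` and `q.1 < p.1`, so `q` lies below `(2k-1)_a` whatever its colour.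
      have hqp := hm.lt_of_mem_tail q hq
      have := colPos_bounds p
      have := colPos_bounds q
      change _ ≤ 4 * (2 * k - 1) - 3 at hp ⊢
      omega
  · intro q hq
    exact (gap_ab_odd_le_iff hk q).2 (hbound q (List.mem_of_mem_head? hq))

lemma ect_eq_card_cons (K : ℕ × Col) (u v n : ℤ) :
    ect K u v n = Nat.card {m : List (ℕ × Col) // IsColPartition (K :: m) ∧
      (∀ p ∈ K :: m, colPos p ≤ colPos K) ∧ (((K :: m).map Prod.fst).sum : ℤ) = n ∧
      (aCt (K :: m) : ℤ) = u ∧ (bCt (K :: m) : ℤ) = v} := by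
  have hcons {l : List (ℕ × Col)} (hne : l ≠ []) (hhead : l.head! = K) : K :: l.tail = l := by
    rw [← hhead, List.cons_head!_tail hne]
  refine Nat.card_congr
    { toFun := fun l => ⟨l.1.tail, by
        obtain ⟨hpart, hbound, hne, hhead, hrest⟩ := l.2
        rw [hcons hne hhead]
        exact ⟨hpart, hbound, hrest⟩⟩
      invFun := fun m => ⟨K :: m.1, m.2.1, m.2.2.1, List.cons_ne_nil K m.1, rfl, m.2.2.2⟩
      left_inv := fun l => Subtype.ext (hcons l.2.2.2.1 l.2.2.2.2.1)
      right_inv := fun _ => rfl }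

lemma aCt_cons_ab (j : ℕ) (m : List (ℕ × Col)) : aCt ((j, Col.ab) :: m) = aCt m + 1 := by
  simp [aCt, add_right_comm]

lemma bCt_cons_ab (j : ℕ) (m : List (ℕ × Col)) : bCt ((j, Col.ab) :: m) = bCt m + 1 := by
  simp [bCt, add_right_comm]

theorem remove_largest_eab_general (u v k n : ℕ) (hk : 1 ≤ k) :
    ect (2*k+1, Col.ab) u v n =
      dct (2*k-1, Col.a) ((u : ℤ) - 1) ((v : ℤ) - 1) ((n : ℤ) - (2*k+1)) := by
  rw [ect_eq_card_cons, dct]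
  refine Nat.card_congr (Equiv.subtypeEquivRight fun m => ?_)
  have hK : colPos (2 * k - 1, Col.a) ≤ colPos (2 * k + 1, Col.ab) := by
    simp only [colPos]
    omega
  simp only [isColPartition_cons_ab_odd_iff hk, List.forall_mem_cons, le_refl, true_and,
    List.map_cons, List.sum_cons, aCt_cons_ab, bCt_cons_ab]
  push_cast
  constructor
  · rintro ⟨⟨hm, hbound⟩, -, hsum, ha, hb⟩
    exact ⟨hm, hbound, by omega, by omega, by omega⟩
  · rintro ⟨hm, hbound, hsum, ha, hb⟩
    exact ⟨⟨hm, hbound⟩, fun p hp => (hbound p hp).trans hK, by omega, by omega, by omega⟩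

/-- Removing the largest part (2k+1)_{ab}:
e_{(2k+1)_{ab}}(u,v,n) = d_{(2k-1)_a}(u-1,v-1,n-2k-1). -/
theorem remove_largest_eab (u v k n : ℕ) (hk : 1 ≤ k) (hn : 1 ≤ n) :
    ect (2*k+1, Col.ab) u v n =
      dct (2*k-1, Col.a) ((u : ℤ) - 1) ((v : ℤ) - 1) ((n : ℤ) - (2*k+1)) :=
  remove_largest_eab_general u v k n hk
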